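/- On the quaternionic Heisenberg group, suppose a smooth function h satisfies 3(∇_X dh)(Y) - Σ_{s=1}³ (∇_{I_sX}dh)(I_sY) = -4Σ_{s=1}³ dh(ξ_s)ω_s(X,Y) for all horizontal X, Y (where ∇ is the flat left-invariant connection). Then at every point, in the left-invariant frame {T_α, X_α = I₁T_α, Y_α = I₂T_α, Z_α = I₃T_α}: (I_jT_α)(T_α h) = -T_α((I_jT_α)h) = ξ_j h and (I_jT_α)((I_iT_α)h) = -(I_iT_α)((I_jT_α)h) = ξ_k h for any cyclic permutation (i,j,k) of (1,2,3). -/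

import Mathlib

/-- Points of the quaternionic Heisenberg group `ℝ^{4n+3}`, with coordinates
`(tᵅ, xᵅ, yᵅ, zᵅ)` for `α = 1,…,n` and central coordinates `(x,y,z)`. -/
abbrev HeisPt (n : ℕ) := (Fin n → ℝ × ℝ × ℝ × ℝ) × (ℝ × ℝ × ℝ)

/-- Action of a vector field on a function: `(V f)(p) = df_p(V(p))`. -/
noncomputable def vfAct {n : ℕ} (V : HeisPt n → HeisPt n) (f : HeisPt n → ℝ) :
    HeisPt n → ℝ :=
  fun p => fderiv ℝ f p (V p)

/-- Commutator of vector fields acting on a function: `[A,B]f = A(Bf) - B(Af)`. -/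
noncomputable def vfBr {n : ℕ} (A B : HeisPt n → HeisPt n) (f : HeisPt n → ℝ) :
    HeisPt n → ℝ :=
  fun p => vfAct A (vfAct B f) p - vfAct B (vfAct A f) p

/-- `T_α = ∂_{tᵅ} + 2xᵅ∂_x + 2yᵅ∂_y + 2zᵅ∂_z`. -/
def Tvf {n : ℕ} (α : Fin n) : HeisPt n → HeisPt n := fun p =>
  (fun β => if β = α then ((1:ℝ), 0, 0, 0) else 0,
    (2 * (p.1 α).2.1, 2 * (p.1 α).2.2.1, 2 * (p.1 α).2.2.2))

/-- `X_α = ∂_{xᵅ} - 2tᵅ∂_x - 2zᵅ∂_y + 2yᵅ∂_z`. -/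
def Xvf {n : ℕ} (α : Fin n) : HeisPt n → HeisPt n := fun p =>
  (fun β => if β = α then (0, (1:ℝ), 0, 0) else 0,
    (-2 * (p.1 α).1, -2 * (p.1 α).2.2.2, 2 * (p.1 α).2.2.1))

/-- `Y_α = ∂_{yᵅ} + 2zᵅ∂_x - 2tᵅ∂_y - 2xᵅ∂_z`. -/
def Yvf {n : ℕ} (α : Fin n) : HeisPt n → HeisPt n := fun p =>
  (fun β => if β = α then (0, 0, (1:ℝ), 0) else 0,
    (2 * (p.1 α).2.2.2, -2 * (p.1 α).1, -2 * (p.1 α).2.1))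

/-- `Z_α = ∂_{zᵅ} - 2yᵅ∂_x + 2xᵅ∂_y - 2tᵅ∂_z`. -/
def Zvf {n : ℕ} (α : Fin n) : HeisPt n → HeisPt n := fun p =>
  (fun β => if β = α then (0, 0, 0, (1:ℝ)) else 0,
    (-2 * (p.1 α).2.2.1, 2 * (p.1 α).2.1, -2 * (p.1 α).1))

/-- The central (vertical) fields `ξ₁ = 2∂_x`, `ξ₂ = 2∂_y`, `ξ₃ = 2∂_z`. -/
def xiVf {n : ℕ} : Fin 3 → HeisPt n → HeisPt n
  | 0 => fun _ => (0, ((2:ℝ), 0, 0))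
  | 1 => fun _ => (0, (0, (2:ℝ), 0))
  | 2 => fun _ => (0, (0, 0, (2:ℝ)))


/-- The horizontal frame `{T_α, X_α = I₁T_α, Y_α = I₂T_α, Z_α = I₃T_α}` indexed by
`Fin 4` (corresponding to the quaternion basis `1, i, j, k`). -/
def hFrame {n : ℕ} (α : Fin n) : Fin 4 → HeisPt n → HeisPt n
  | 0 => Tvf α
  | 1 => Xvf α
  | 2 => Yvf α
  | 3 => Zvf α

/-- The sign in `I_s e_m = (qSgn s m) e_{qTgt s m}` (left quaternion multiplication on
the basis `1,i,j,k`). -/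
def qSgn : Fin 3 → Fin 4 → ℝ
  | 0, 0 => 1 | 0, 1 => -1 | 0, 2 => 1  | 0, 3 => -1
  | 1, 0 => 1 | 1, 1 => -1 | 1, 2 => -1 | 1, 3 => 1
  | 2, 0 => 1 | 2, 1 => 1  | 2, 2 => -1 | 2, 3 => -1

/-- The target index in `I_s e_m = (qSgn s m) e_{qTgt s m}`. -/
def qTgt : Fin 3 → Fin 4 → Fin 4
  | 0, 0 => 1 | 0, 1 => 0 | 0, 2 => 3 | 0, 3 => 2
  | 1, 0 => 2 | 1, 1 => 3 | 1, 2 => 0 | 1, 3 => 1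
  | 2, 0 => 3 | 2, 1 => 2 | 2, 2 => 1 | 2, 3 => 0

lemma affine_comm {n : ℕ} (h : HeisPt n → ℝ) (hh : ContDiff ℝ (⊤ : ℕ∞) h)
    (c₁ c₂ : HeisPt n) (L₁ L₂ : HeisPt n →L[ℝ] HeisPt n) (p : HeisPt n) :
    vfAct (fun q => c₁ + L₁ q) (vfAct (fun q => c₂ + L₂ q) h) p -
      vfAct (fun q => c₂ + L₂ q) (vfAct (fun q => c₁ + L₁ q) h) p =
    fderiv ℝ h p (L₂ (c₁ + L₁ p) - L₁ (c₂ + L₂ p)) := by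
  have hd1 : DifferentiableAt ℝ (fun q => fderiv ℝ h q) p :=
    ((hh.fderiv_right (m := 1) (WithTop.coe_le_coe.mpr le_top)).differentiable one_ne_zero) p
  have haff : ∀ (c : HeisPt n) (L : HeisPt n →L[ℝ] HeisPt n),
      fderiv ℝ (fun q => c + L q) p = L := by
    intro c L
    rw [fderiv_const_add, L.fderiv]
  have hsym := (hh.contDiffAt (x := p)).isSymmSndFDerivAt (by rw [minSmoothness_of_isRCLikeNormedField]; exact WithTop.coe_le_coe.mpr le_top)
  have key : ∀ (c c' : HeisPt n) (L L' : HeisPt n →L[ℝ] HeisPt n),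
      vfAct (fun q => c + L q) (vfAct (fun q => c' + L' q) h) p =
      fderiv ℝ (fderiv ℝ h) p (c + L p) (c' + L' p) + fderiv ℝ h p (L' (c + L p)) := by
    intro c c' L L'
    have : vfAct (fun q => c' + L' q) h = fun q => (fderiv ℝ h q) (c' + L' q) := rfl
    rw [vfAct, this]
    rw [fderiv_clm_apply hd1 ((L'.differentiable.const_add c').differentiableAt)]
    rw [haff]
    simp only [ContinuousLinearMap.add_apply, ContinuousLinearMap.flip_apply,
      ContinuousLinearMap.coe_comp', Function.comp_apply]
    exact add_comm _ _
  rw [key, key, hsym (c₂ + L₂ p) (c₁ + L₁ p), map_sub]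
  ring

section Aux

open ContinuousLinearMap

variable {n : ℕ}

noncomputable def coordT (α : Fin n) : HeisPt n →L[ℝ] ℝ :=
  (fst ℝ ℝ (ℝ × ℝ × ℝ)).comp ((proj α).comp (fst ℝ _ _))
noncomputable def coordX (α : Fin n) : HeisPt n →L[ℝ] ℝ :=
  ((fst ℝ ℝ (ℝ × ℝ)).comp (snd ℝ ℝ _)).comp ((proj α).comp (fst ℝ _ _))
noncomputable def coordY (α : Fin n) : HeisPt n →L[ℝ] ℝ :=
  (((fst ℝ ℝ ℝ).comp (snd ℝ ℝ _)).comp (snd ℝ ℝ _)).comp ((proj α).comp (fst ℝ _ _))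
noncomputable def coordZ (α : Fin n) : HeisPt n →L[ℝ] ℝ :=
  (((snd ℝ ℝ ℝ).comp (snd ℝ ℝ _)).comp (snd ℝ ℝ _)).comp ((proj α).comp (fst ℝ _ _))

@[simp] lemma coordT_apply (α : Fin n) (p : HeisPt n) : coordT α p = (p.1 α).1 := rfl
@[simp] lemma coordX_apply (α : Fin n) (p : HeisPt n) : coordX α p = (p.1 α).2.1 := rfl
@[simp] lemma coordY_apply (α : Fin n) (p : HeisPt n) : coordY α p = (p.1 α).2.2.1 := rfl
@[simp] lemma coordZ_apply (α : Fin n) (p : HeisPt n) : coordZ α p = (p.1 α).2.2.2 := rfl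

noncomputable def mk3 (A B C : HeisPt n →L[ℝ] ℝ) : HeisPt n →L[ℝ] HeisPt n :=
  (0 : HeisPt n →L[ℝ] (Fin n → ℝ × ℝ × ℝ × ℝ)).prod (A.prod (B.prod C))

@[simp] lemma mk3_apply (A B C : HeisPt n →L[ℝ] ℝ) (p : HeisPt n) :
    mk3 A B C p = ((0 : Fin n → ℝ × ℝ × ℝ × ℝ), (A p, B p, C p)) := rfl

noncomputable def TL (α : Fin n) : HeisPt n →L[ℝ] HeisPt n :=
  mk3 ((2:ℝ) • coordX α) ((2:ℝ) • coordY α) ((2:ℝ) • coordZ α)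
noncomputable def XL (α : Fin n) : HeisPt n →L[ℝ] HeisPt n :=
  mk3 ((-2:ℝ) • coordT α) ((-2:ℝ) • coordZ α) ((2:ℝ) • coordY α)
noncomputable def YL (α : Fin n) : HeisPt n →L[ℝ] HeisPt n :=
  mk3 ((2:ℝ) • coordZ α) ((-2:ℝ) • coordT α) ((-2:ℝ) • coordX α)
noncomputable def ZL (α : Fin n) : HeisPt n →L[ℝ] HeisPt n :=
  mk3 ((-2:ℝ) • coordY α) ((2:ℝ) • coordX α) ((-2:ℝ) • coordT α)

def Tc (α : Fin n) : HeisPt n := (fun β => if β = α then ((1:ℝ), 0, 0, 0) else 0, 0)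
def Xc (α : Fin n) : HeisPt n := (fun β => if β = α then (0, (1:ℝ), 0, 0) else 0, 0)
def Yc (α : Fin n) : HeisPt n := (fun β => if β = α then (0, 0, (1:ℝ), 0) else 0, 0)
def Zc (α : Fin n) : HeisPt n := (fun β => if β = α then (0, 0, 0, (1:ℝ)) else 0, 0)

lemma Tvf_eq (α : Fin n) : Tvf α = fun p => Tc α + TL α p := by
  funext p
  refine Prod.ext (funext fun β => ?_) ?_ <;>
    simp [Tvf, Tc, TL, Prod.ext_iff] <;> ring_nf <;> simp
lemma Xvf_eq (α : Fin n) : Xvf α = fun p => Xc α + XL α p := by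
  funext p
  refine Prod.ext (funext fun β => ?_) ?_ <;>
    simp [Xvf, Xc, XL, Prod.ext_iff] <;> ring_nf <;> simp
lemma Yvf_eq (α : Fin n) : Yvf α = fun p => Yc α + YL α p := by
  funext p
  refine Prod.ext (funext fun β => ?_) ?_ <;>
    simp [Yvf, Yc, YL, Prod.ext_iff] <;> ring_nf <;> simp
lemma Zvf_eq (α : Fin n) : Zvf α = fun p => Zc α + ZL α p := by
  funext p
  refine Prod.ext (funext fun β => ?_) ?_ <;>
    simp [Zvf, Zc, ZL, Prod.ext_iff] <;> ring_nf <;> simp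

end Aux

section Br

variable {n : ℕ} (h : HeisPt n → ℝ) (hh : ContDiff ℝ (⊤ : ℕ∞) h) (α : Fin n) (p : HeisPt n)
include hh

lemma br_XT : vfAct (Xvf α) (vfAct (Tvf α) h) p - vfAct (Tvf α) (vfAct (Xvf α) h) p
    = 2 * vfAct (xiVf 0) h p := by
  rw [Tvf_eq α, Xvf_eq α, affine_comm h hh _ _ _ _ p]
  have h1 : TL α (Xc α + XL α p) - XL α (Tc α + TL α p)
      = (2:ℝ) • ((0, ((2:ℝ), 0, 0)) : HeisPt n) := by
    refine Prod.ext ?_ ?_ <;> simp [TL, XL, Tc, Xc, Prod.ext_iff] <;> ring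
  rw [h1, map_smul]
  simp [vfAct, xiVf, smul_eq_mul]

lemma br_YT : vfAct (Yvf α) (vfAct (Tvf α) h) p - vfAct (Tvf α) (vfAct (Yvf α) h) p
    = 2 * vfAct (xiVf 1) h p := by
  rw [Tvf_eq α, Yvf_eq α, affine_comm h hh _ _ _ _ p]
  have h1 : TL α (Yc α + YL α p) - YL α (Tc α + TL α p)
      = (2:ℝ) • ((0, (0, (2:ℝ), 0)) : HeisPt n) := by
    refine Prod.ext ?_ ?_ <;> simp [TL, YL, Tc, Yc, Prod.ext_iff] <;> ring
  rw [h1, map_smul]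
  simp [vfAct, xiVf, smul_eq_mul]

lemma br_ZT : vfAct (Zvf α) (vfAct (Tvf α) h) p - vfAct (Tvf α) (vfAct (Zvf α) h) p
    = 2 * vfAct (xiVf 2) h p := by
  rw [Tvf_eq α, Zvf_eq α, affine_comm h hh _ _ _ _ p]
  have h1 : TL α (Zc α + ZL α p) - ZL α (Tc α + TL α p)
      = (2:ℝ) • ((0, (0, 0, (2:ℝ))) : HeisPt n) := by
    refine Prod.ext ?_ ?_ <;> simp [TL, ZL, Tc, Zc, Prod.ext_iff] <;> ring
  rw [h1, map_smul]
  simp [vfAct, xiVf, smul_eq_mul]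

lemma br_YX : vfAct (Yvf α) (vfAct (Xvf α) h) p - vfAct (Xvf α) (vfAct (Yvf α) h) p
    = 2 * vfAct (xiVf 2) h p := by
  rw [Xvf_eq α, Yvf_eq α, affine_comm h hh _ _ _ _ p]
  have h1 : XL α (Yc α + YL α p) - YL α (Xc α + XL α p)
      = (2:ℝ) • ((0, (0, 0, (2:ℝ))) : HeisPt n) := by
    refine Prod.ext ?_ ?_ <;> simp [XL, YL, Xc, Yc, Prod.ext_iff] <;> ring
  rw [h1, map_smul]
  simp [vfAct, xiVf, smul_eq_mul]

lemma br_ZY : vfAct (Zvf α) (vfAct (Yvf α) h) p - vfAct (Yvf α) (vfAct (Zvf α) h) p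
    = 2 * vfAct (xiVf 0) h p := by
  rw [Yvf_eq α, Zvf_eq α, affine_comm h hh _ _ _ _ p]
  have h1 : YL α (Zc α + ZL α p) - ZL α (Yc α + YL α p)
      = (2:ℝ) • ((0, ((2:ℝ), 0, 0)) : HeisPt n) := by
    refine Prod.ext ?_ ?_ <;> simp [YL, ZL, Yc, Zc, Prod.ext_iff] <;> ring
  rw [h1, map_smul]
  simp [vfAct, xiVf, smul_eq_mul]

lemma br_XZ : vfAct (Xvf α) (vfAct (Zvf α) h) p - vfAct (Zvf α) (vfAct (Xvf α) h) p
    = 2 * vfAct (xiVf 1) h p := by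
  rw [Zvf_eq α, Xvf_eq α, affine_comm h hh _ _ _ _ p]
  have h1 : ZL α (Xc α + XL α p) - XL α (Zc α + ZL α p)
      = (2:ℝ) • ((0, (0, (2:ℝ), 0)) : HeisPt n) := by
    refine Prod.ext ?_ ?_ <;> simp [ZL, XL, Zc, Xc, Prod.ext_iff] <;> ring
  rw [h1, map_smul]
  simp [vfAct, xiVf, smul_eq_mul]

end Br

lemma solve {n : ℕ} (h : HeisPt n → ℝ) (hh : ContDiff ℝ (⊤ : ℕ∞) h)
    (hcon : ∀ (α β : Fin n) (a b : Fin 4) (p : HeisPt n),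
      3 * vfAct (hFrame α a) (vfAct (hFrame β b) h) p -
        ∑ s : Fin 3, qSgn s a * qSgn s b *
          vfAct (hFrame α (qTgt s a)) (vfAct (hFrame β (qTgt s b)) h) p =
      -4 * ∑ s : Fin 3, vfAct (xiVf s) h p *
        (if α = β then qSgn s a * (if qTgt s a = b then (1:ℝ) else 0) else 0))
    (α : Fin n) (p : HeisPt n) :
    (vfAct (Xvf α) (vfAct (Tvf α) h) p = vfAct (xiVf 0) h p ∧
      vfAct (Tvf α) (vfAct (Xvf α) h) p = -vfAct (xiVf 0) h p) ∧
    (vfAct (Yvf α) (vfAct (Tvf α) h) p = vfAct (xiVf 1) h p ∧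
      vfAct (Tvf α) (vfAct (Yvf α) h) p = -vfAct (xiVf 1) h p) ∧
    (vfAct (Zvf α) (vfAct (Tvf α) h) p = vfAct (xiVf 2) h p ∧
      vfAct (Tvf α) (vfAct (Zvf α) h) p = -vfAct (xiVf 2) h p) ∧
    (vfAct (Yvf α) (vfAct (Xvf α) h) p = vfAct (xiVf 2) h p ∧
      vfAct (Xvf α) (vfAct (Yvf α) h) p = -vfAct (xiVf 2) h p) ∧
    (vfAct (Zvf α) (vfAct (Yvf α) h) p = vfAct (xiVf 0) h p ∧
      vfAct (Yvf α) (vfAct (Zvf α) h) p = -vfAct (xiVf 0) h p) ∧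
    (vfAct (Xvf α) (vfAct (Zvf α) h) p = vfAct (xiVf 1) h p ∧
      vfAct (Zvf α) (vfAct (Xvf α) h) p = -vfAct (xiVf 1) h p) := by
  have E1 := hcon α α 0 1 p
  have E2 := hcon α α 0 2 p
  have E3 := hcon α α 0 3 p
  have E4 := hcon α α 1 2 p
  have E5 := hcon α α 2 3 p
  have E6 := hcon α α 3 1 p
  simp only [Fin.sum_univ_three, qSgn, qTgt, hFrame, if_pos rfl] at E1 E2 E3 E4 E5 E6
  simp only [Fin.reduceEq, reduceIte] at E1 E2 E3 E4 E5 E6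
  norm_num at E1 E2 E3 E4 E5 E6
  have C1 := br_XT h hh α p
  have C2 := br_YT h hh α p
  have C3 := br_ZT h hh α p
  have C4 := br_YX h hh α p
  have C5 := br_ZY h hh α p
  have C6 := br_XZ h hh α p
  refine ⟨⟨by linarith, by linarith⟩, ⟨by linarith, by linarith⟩, ⟨by linarith, by linarith⟩,
    ⟨by linarith, by linarith⟩, ⟨by linarith, by linarith⟩, ⟨by linarith, by linarith⟩⟩

/-- If `h` on the quaternionic Heisenberg group satisfies
`3(∇_X dh)(Y) - Σ_s (∇_{I_sX}dh)(I_sY) = -4 Σ_s dh(ξ_s) ω_s(X,Y)` for all horizontal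
`X, Y` (here expressed in the parallel left-invariant frame, for which
`∇dh(X,Y) = X(Yh)` and `ω_s(e_a, e_b) = g(I_s e_a, e_b)`), then in the frame
`{T_α, X_α = I₁T_α, Y_α = I₂T_α, Z_α = I₃T_α}` one has
`(I_jT_α)(T_α h) = -T_α((I_jT_α)h) = ξ_j h` and
`(I_jT_α)((I_iT_α)h) = -(I_iT_α)((I_jT_α)h) = ξ_k h` for every cyclic permutation
`(i,j,k)` of `(1,2,3)`. -/
theorem heisenberg_horizontal_hessian_skew {n : ℕ} (h : HeisPt n → ℝ)
    (hh : ContDiff ℝ (⊤ : ℕ∞) h)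
    (hcon : ∀ (α β : Fin n) (a b : Fin 4) (p : HeisPt n),
      3 * vfAct (hFrame α a) (vfAct (hFrame β b) h) p -
        ∑ s : Fin 3, qSgn s a * qSgn s b *
          vfAct (hFrame α (qTgt s a)) (vfAct (hFrame β (qTgt s b)) h) p =
      -4 * ∑ s : Fin 3, vfAct (xiVf s) h p *
        (if α = β then qSgn s a * (if qTgt s a = b then (1:ℝ) else 0) else 0)) :
    (∀ (α : Fin n) (j : Fin 3),
      vfAct (hFrame α j.succ) (vfAct (hFrame α 0) h) = vfAct (xiVf j) h ∧
      vfAct (hFrame α 0) (vfAct (hFrame α j.succ) h) =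
        fun p => -(vfAct (xiVf j) h p)) ∧
    (∀ (α : Fin n) (i j k : Fin 3),
      ((i, j, k) = ((0 : Fin 3), (1 : Fin 3), (2 : Fin 3)) ∨
        (i, j, k) = ((1 : Fin 3), (2 : Fin 3), (0 : Fin 3)) ∨
        (i, j, k) = ((2 : Fin 3), (0 : Fin 3), (1 : Fin 3))) →
      vfAct (hFrame α j.succ) (vfAct (hFrame α i.succ) h) = vfAct (xiVf k) h ∧
      vfAct (hFrame α i.succ) (vfAct (hFrame α j.succ) h) =
        fun p => -(vfAct (xiVf k) h p)) := by
  constructor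
  · intro α j
    fin_cases j
    · exact ⟨funext fun p => (solve h hh hcon α p).1.1,
        funext fun p => (solve h hh hcon α p).1.2⟩
    · exact ⟨funext fun p => (solve h hh hcon α p).2.1.1,
        funext fun p => (solve h hh hcon α p).2.1.2⟩
    · exact ⟨funext fun p => (solve h hh hcon α p).2.2.1.1,
        funext fun p => (solve h hh hcon α p).2.2.1.2⟩
  · intro α i j k hperm
    rcases hperm with hp | hp | hp <;> simp only [Prod.mk.injEq] at hp <;>
      obtain ⟨rfl, rfl, rfl⟩ := hp
    · exact ⟨funext fun p => (solve h hh hcon α p).2.2.2.1.1,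
        funext fun p => (solve h hh hcon α p).2.2.2.1.2⟩
    · exact ⟨funext fun p => (solve h hh hcon α p).2.2.2.2.1.1,
        funext fun p => (solve h hh hcon α p).2.2.2.2.1.2⟩
    · exact ⟨funext fun p => (solve h hh hcon α p).2.2.2.2.2.1,
        funext fun p => (solve h hh hcon α p).2.2.2.2.2.2⟩
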